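/- arXiv:2509.10194 — 2 statements merged into one kernel-verified Lean document; each statement's English description precedes it below -/
import Mathlib

section
/- Let (Ω,Σ,μ) be a σ-finite measure space, let K ⊆ L¹(μ) be nonempty, bounded in L¹-norm, closed, convex, and measure-compact (every sequence in K has a subsequence converging locally in measure to an element of K), and let H ⊆ K be a nonempty convex subset with diam(H) > 0. Then the set C(H) of Chebyshev centers of H, taken over centers in K, is nonempty, bounded, closed and convex. -/
/-! The radius functional is 1-Lipschitz and convex, so its minimizers over a closed convex `K`
form a closed convex subset of `K`. A minimizer exists because the radius is sequentially lower
semicontinuous for local convergence in measure: on each set of finite measure a subsequence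
converges a.e., Fatou's lemma bounds the `L¹` distance there, and by σ-finiteness such sets exhaust
the space. Measure-compactness then extracts a minimizer from a minimizing sequence. -/

open MeasureTheory Filter Set Topology

noncomputable section

variable {α : Type*} [MeasurableSpace α]

/-- Uniform integrability of a family in `L¹(μ)` in the sense of the paper:
(i) uniform absolute continuity of the integrals, and (ii) uniformly small tails. -/
def UnifInt (μ : Measure α) (F : Set (Lp ℝ 1 μ)) : Prop :=
  (∀ ε : ℝ, 0 < ε → ∃ δ : ℝ, 0 < δ ∧ ∀ E : Set α, MeasurableSet E →
      μ E < ENNReal.ofReal δ → ∀ f ∈ F, ∫ x in E, |f x| ∂μ < ε) ∧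
  (∀ ε : ℝ, 0 < ε → ∃ M : ℝ, 0 < M ∧ ∀ f ∈ F, ∫ x in {x | M < |f x|}, |f x| ∂μ < ε)

/-- A sequence in `L¹(μ)` converges locally in measure to `g : α → ℝ`. -/
def TendstoLocInMeasure (μ : Measure α) (f : ℕ → Lp ℝ 1 μ) (g : α → ℝ) : Prop :=
  ∀ E : Set α, MeasurableSet E → μ E < ⊤ → ∀ ε : ℝ, 0 < ε →
    Tendsto (fun n => μ {x | x ∈ E ∧ ε < |f n x - g x|}) atTop (𝓝 0)

/-- A set `K ⊆ L¹(μ)` is measure-compact: every sequence in `K` has a subsequence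
converging locally in measure to an element of `K`. -/
def MeasCompact (μ : Measure α) (K : Set (Lp ℝ 1 μ)) : Prop :=
  ∀ f : ℕ → Lp ℝ 1 μ, (∀ n, f n ∈ K) →
    ∃ g ∈ K, ∃ φ : ℕ → ℕ, StrictMono φ ∧ TendstoLocInMeasure μ (fun k => f (φ k)) ⇑g

/-- The set of Chebyshev centers of `H` taken over centers in `K`: minimizers over `K`
of the radius functional `z ↦ sup_{x ∈ H} ‖x − z‖₁`. -/
def ChebyshevCentersOver (μ : Measure α) (K H : Set (Lp ℝ 1 μ)) : Set (Lp ℝ 1 μ) :=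
  {c | c ∈ K ∧ ∀ z ∈ K, (⨆ x ∈ H, dist x c) ≤ ⨆ x ∈ H, dist x z}

open scoped ENNReal

section ChebyshevRadius

variable {E : Type*} [PseudoMetricSpace E]

def chebyshevRadius (H : Set E) (z : E) : ℝ :=
  ⨆ x ∈ H, dist x z

variable {H : Set E}

lemma chebyshevRadius_nonneg (z : E) : 0 ≤ chebyshevRadius H z :=
  Real.iSup_nonneg fun _ => Real.iSup_nonneg fun _ => dist_nonneg

lemma chebyshevRadius_le {z : E} {C : ℝ} (hC : 0 ≤ C) (h : ∀ x ∈ H, dist x z ≤ C) :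
    chebyshevRadius H z ≤ C :=
  Real.iSup_le (fun x => Real.iSup_le (h x) hC) hC

lemma dist_le_chebyshevRadius (hH : Bornology.IsBounded H) {x : E} (hx : x ∈ H) (z : E) :
    dist x z ≤ chebyshevRadius H z := by
  obtain ⟨C, hC⟩ := hH.subset_closedBall z
  refine le_ciSup_of_le ⟨max C 0, ?_⟩ x (le_ciSup_of_le (finite_range _).bddAbove hx le_rfl)
  rintro _ ⟨y, rfl⟩
  exact Real.iSup_le (fun hy => le_max_of_le_left (hC hy)) (le_max_right _ _)

lemma lipschitzWith_chebyshevRadius (hH : Bornology.IsBounded H) :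
    LipschitzWith 1 (chebyshevRadius H) :=
  LipschitzWith.of_le_add fun z w =>
    chebyshevRadius_le (add_nonneg (chebyshevRadius_nonneg w) dist_nonneg) fun x hx =>
      calc dist x z ≤ dist x w + dist w z := dist_triangle x w z
        _ ≤ chebyshevRadius H w + dist z w := by
          rw [dist_comm w z]
          exact add_le_add_left (dist_le_chebyshevRadius hH hx w) _

end ChebyshevRadius

lemma convexOn_chebyshevRadius {E : Type*} [SeminormedAddCommGroup E] [NormedSpace ℝ E]
    {H : Set E} (hH : Bornology.IsBounded H) : ConvexOn ℝ univ (chebyshevRadius H) := by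
  refine ⟨convex_univ, fun z _ w _ a b ha hb hab => ?_⟩
  have := chebyshevRadius_nonneg (H := H) z
  have := chebyshevRadius_nonneg (H := H) w
  refine chebyshevRadius_le (by positivity) fun x hx => ?_
  calc dist x (a • z + b • w) = dist (a • z + b • w) x := dist_comm _ _
    _ ≤ a * dist z x + b * dist w x :=
      (convexOn_dist x convex_univ).2 (mem_univ z) (mem_univ w) ha hb hab
    _ ≤ a * chebyshevRadius H z + b * chebyshevRadius H w := by
      rw [dist_comm z, dist_comm w]
      gcongr
      exacts [dist_le_chebyshevRadius hH hx z, dist_le_chebyshevRadius hH hx w]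

section Minimizers

variable {E β : Type*} {K : Set E} {f : E → β}

lemma IsClosed.setOf_isMinOn [TopologicalSpace E] [LinearOrder β] [TopologicalSpace β]
    [ClosedIicTopology β] (hK : IsClosed K) (hf : LowerSemicontinuous f) :
    IsClosed {c | c ∈ K ∧ IsMinOn f K c} := by
  have : {c | c ∈ K ∧ IsMinOn f K c} = K ∩ ⋂ z ∈ K, f ⁻¹' Iic (f z) := by
    ext c
    simp [isMinOn_iff]
  rw [this]
  exact hK.inter (isClosed_biInter fun z _ => hf.isClosed_preimage (f z))

lemma ConvexOn.convex_setOf_isMinOn {𝕜 : Type*} [Semiring 𝕜] [PartialOrder 𝕜] [AddCommMonoid E]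
    [PartialOrder β] [AddCommMonoid β] [IsOrderedAddMonoid β] [SMul 𝕜 E] [Module 𝕜 β]
    [PosSMulMono 𝕜 β] (hf : ConvexOn 𝕜 K f) : Convex 𝕜 {c | c ∈ K ∧ IsMinOn f K c} := by
  have : {c | c ∈ K ∧ IsMinOn f K c} = K ∩ ⋂ z ∈ K, {c | c ∈ K ∧ f c ≤ f z} := by
    ext c
    simp +contextual [isMinOn_iff]
  rw [this]
  exact hf.1.inter (convex_iInter₂ fun z _ => hf.convex_le (f z))

end Minimizers

section LocalConvergenceInMeasure

variable {μ : Measure α}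

lemma TendstoInMeasure.const_sub {ι E : Type*} [SeminormedAddCommGroup E] {l : Filter ι}
    {f : ι → α → E} {g : α → E} (h : TendstoInMeasure μ f l g) (x : α → E) :
    TendstoInMeasure μ (fun i => x - f i) l (x - g) := by
  intro ε hε
  simpa only [Pi.sub_apply, edist_sub_left] using h ε hε

lemma TendstoLocInMeasure.tendstoInMeasure_restrict {f : ℕ → Lp ℝ 1 μ} {g : α → ℝ}
    (hf : TendstoLocInMeasure μ f g) {E : Set α} (hE : MeasurableSet E) (hμE : μ E < ∞) :
    TendstoInMeasure (μ.restrict E) (fun n => ⇑(f n)) atTop g := by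
  rw [tendstoInMeasure_iff_dist]
  intro ε hε
  refine tendsto_of_tendsto_of_tendsto_of_le_of_le tendsto_const_nhds
    (hf E hE hμE (ε / 2) (half_pos hε)) (fun _ => zero_le) fun n => ?_
  rw [Measure.restrict_apply' hE]
  exact measure_mono fun x ⟨hx, hxE⟩ =>
    ⟨hxE, (half_lt_self hε).trans_le hx⟩

lemma eLpNorm_one_le_of_forall_restrict_spanningSets [SigmaFinite μ] {E : Type*}
    [NormedAddCommGroup E] {f : α → E} {C : ℝ≥0∞}
    (h : ∀ n, eLpNorm f 1 (μ.restrict (spanningSets μ n)) ≤ C) : eLpNorm f 1 μ ≤ C := by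
  simp only [eLpNorm_one_eq_lintegral_enorm] at h ⊢
  rw [← setLIntegral_univ, ← iUnion_spanningSets μ,
    setLIntegral_iUnion_of_directed _ (monotone_spanningSets μ).directed_le]
  exact iSup_le h

lemma dist_le_of_tendstoLocInMeasure [SigmaFinite μ] {f : ℕ → Lp ℝ 1 μ} {g : Lp ℝ 1 μ}
    (hf : TendstoLocInMeasure μ f g) (x : Lp ℝ 1 μ) {C : ℝ}
    (hC : ∀ᶠ n in atTop, dist x (f n) ≤ C) : dist x g ≤ C := by
  obtain ⟨n, hn⟩ := hC.exists
  rw [← ENNReal.ofReal_le_ofReal_iff (dist_nonneg.trans hn), ← edist_dist, Lp.edist_def]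
  refine eLpNorm_one_le_of_forall_restrict_spanningSets fun k => ?_
  refine eLpNorm_le_of_tendstoInMeasure (f := fun n => ⇑x - ⇑(f n)) (hC.mono fun n hn => ?_)
    (TendstoInMeasure.const_sub (hf.tendstoInMeasure_restrict (measurableSet_spanningSets μ k)
      (measure_spanningSets_lt_top μ k)) x)
    fun n => ((Lp.aestronglyMeasurable x).sub (Lp.aestronglyMeasurable (f n))).restrict
  calc eLpNorm (⇑x - ⇑(f n)) 1 (μ.restrict (spanningSets μ k))
      ≤ eLpNorm (⇑x - ⇑(f n)) 1 μ := eLpNorm_mono_measure _ Measure.restrict_le_self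
    _ ≤ ENNReal.ofReal C := by
      rw [← Lp.edist_def, edist_dist]
      exact ENNReal.ofReal_le_ofReal hn

lemma chebyshevRadius_le_of_tendstoLocInMeasure [SigmaFinite μ] {H : Set (Lp ℝ 1 μ)}
    (hH : Bornology.IsBounded H) {f : ℕ → Lp ℝ 1 μ} {g : Lp ℝ 1 μ}
    (hf : TendstoLocInMeasure μ f g) {C : ℝ} (hC : ∀ᶠ n in atTop, chebyshevRadius H (f n) ≤ C) :
    chebyshevRadius H g ≤ C := by
  obtain ⟨n, hn⟩ := hC.exists
  exact chebyshevRadius_le ((chebyshevRadius_nonneg _).trans hn) fun x hx =>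
    dist_le_of_tendstoLocInMeasure hf x
      (hC.mono fun n hn => (dist_le_chebyshevRadius hH hx (f n)).trans hn)

end LocalConvergenceInMeasure

lemma exists_isMinOn_chebyshevRadius_of_measCompact {μ : Measure α} [SigmaFinite μ]
    {K H : Set (Lp ℝ 1 μ)} (hK : MeasCompact μ K) (hne : K.Nonempty)
    (hH : Bornology.IsBounded H) : ∃ c ∈ K, IsMinOn (chebyshevRadius H) K c := by
  have hbdd : BddBelow (chebyshevRadius H '' K) :=
    ⟨0, forall_mem_image.2 fun z _ => chebyshevRadius_nonneg z⟩
  obtain ⟨u, hu_anti, hu_lim, hu_mem⟩ := exists_seq_tendsto_sInf (hne.image _) hbdd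
  choose z hzK hzu using hu_mem
  obtain ⟨g, hgK, φ, hφ, hzg⟩ := hK z hzK
  -- `u ∘ φ` is antitone, so each of its values bounds the tail of the subsequence
  have hg : chebyshevRadius H g ≤ sInf (chebyshevRadius H '' K) :=
    ge_of_tendsto' (hu_lim.comp hφ.tendsto_atTop) fun N =>
      chebyshevRadius_le_of_tendstoLocInMeasure hH hzg <| (eventually_ge_atTop N).mono
        fun n hn => (hzu (φ n)).trans_le (hu_anti (hφ.monotone hn))
  exact ⟨g, hgK, fun z hz => hg.trans (csInf_le hbdd ⟨z, hz, rfl⟩)⟩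

theorem chebyshevCenters_nonempty_bounded_closed_convex_general
    (μ : Measure α) [SigmaFinite μ]
    (K : Set (Lp ℝ 1 μ)) (hne : K.Nonempty) (hbdd : Bornology.IsBounded K)
    (hclosed : IsClosed K) (hconv : Convex ℝ K) (hmc : MeasCompact μ K)
    (H : Set (Lp ℝ 1 μ)) (hHK : H ⊆ K) :
    (ChebyshevCentersOver μ K H).Nonempty ∧
    Bornology.IsBounded (ChebyshevCentersOver μ K H) ∧
    IsClosed (ChebyshevCentersOver μ K H) ∧
    Convex ℝ (ChebyshevCentersOver μ K H) := by
  have hH : Bornology.IsBounded H := hbdd.subset hHK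
  have hcenters : ChebyshevCentersOver μ K H = {c | c ∈ K ∧ IsMinOn (chebyshevRadius H) K c} :=
    rfl
  obtain ⟨c, hc⟩ := exists_isMinOn_chebyshevRadius_of_measCompact hmc hne hH
  rw [hcenters]
  exact ⟨⟨c, hc⟩, hbdd.subset fun _ hc => hc.1,
    hclosed.setOf_isMinOn (lipschitzWith_chebyshevRadius hH).continuous.lowerSemicontinuous,
    ((convexOn_chebyshevRadius hH).subset (subset_univ K) hconv).convex_setOf_isMinOn⟩

/-- for a nonempty convex `H ⊆ K` of positive diameter, with `K` nonempty,
bounded, closed, convex and measure-compact, the set of Chebyshev centers of `H` over `K`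
is nonempty, bounded, closed and convex. -/
theorem chebyshevCenters_nonempty_bounded_closed_convex
    (μ : Measure α) [SigmaFinite μ]
    (K : Set (Lp ℝ 1 μ)) (hne : K.Nonempty) (hbdd : Bornology.IsBounded K)
    (hclosed : IsClosed K) (hconv : Convex ℝ K) (hmc : MeasCompact μ K)
    (H : Set (Lp ℝ 1 μ)) (hHK : H ⊆ K) (hHne : H.Nonempty) (hHconv : Convex ℝ H)
    (hHdiam : 0 < Metric.diam H) :
    (ChebyshevCentersOver μ K H).Nonempty ∧
    Bornology.IsBounded (ChebyshevCentersOver μ K H) ∧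
    IsClosed (ChebyshevCentersOver μ K H) ∧
    Convex ℝ (ChebyshevCentersOver μ K H) :=
  chebyshevCenters_nonempty_bounded_closed_convex_general μ K hne hbdd hclosed hconv hmc H hHK
end
end

section
/- Let (Ω,Σ,μ) be a σ-finite measure space and let K ⊆ L¹(μ) be nonempty, bounded in L¹-norm, closed, convex, and measure-compact (every sequence in K has a subsequence converging locally in measure to an element of K). Then every nonexpansive map T : K → K has a fixed point. -/
/-!
A nonexpansive self-map of a bounded closed convex set has approximate fixed points `xₙ`, namely
the fixed points of the contractions `y ↦ lineMap x₀ (T y) rₙ` with `rₙ → 1`. Measure-compactness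
gives a subsequence converging locally in measure to some `g ∈ K`, and by σ-finiteness a further
subsequence converging almost everywhere. Dominated convergence then gives
`‖xₙ - T g‖ - ‖xₙ - g‖ → ‖g - T g‖`, while nonexpansiveness bounds the left side by
`‖T xₙ - xₙ‖ → 0`.
-/

open MeasureTheory Filter Set Topology

noncomputable section

variable {α : Type*} [MeasurableSpace α]

open scoped ENNReal

namespace MeasureTheory.Measure.AbsolutelyContinuous

variable {ν μ : Measure α}

theorem tendsto_measure_zero [IsFiniteMeasure ν] [SigmaFinite μ] (hνμ : ν ≪ μ)
    {ι : Type*} {l : Filter ι} {s : ι → Set α} (hs : Tendsto (μ ∘ s) l (𝓝 0)) :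
    Tendsto (ν ∘ s) l (𝓝 0) := by
  rw [← withDensity_rnDeriv_eq ν μ hνμ]
  simp_rw [Function.comp_def, withDensity_apply']
  exact tendsto_setLIntegral_zero (lintegral_rnDeriv_lt_top ν μ).ne hs

theorem tendsto_measure_zero_of_forall_inter [IsFiniteMeasure ν] [SigmaFinite μ] (hνμ : ν ≪ μ)
    {ι : Type*} {l : Filter ι} {s : ι → Set α}
    (hs : ∀ E, MeasurableSet E → μ E < ∞ → Tendsto (fun i => μ (s i ∩ E)) l (𝓝 0)) :
    Tendsto (ν ∘ s) l (𝓝 0) := by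
  rw [ENNReal.tendsto_nhds_zero]
  intro ε hε
  have hcompl : Tendsto (fun k => ν (spanningSets μ k)ᶜ) atTop (𝓝 0) := by
    have := tendsto_measure_iInter_atTop (μ := ν)
      (fun k => (measurableSet_spanningSets μ k).compl.nullMeasurableSet)
      (fun _ _ hij => compl_subset_compl.2 (monotone_spanningSets μ hij)) ⟨0, measure_ne_top ν _⟩
    rwa [← compl_iUnion, iUnion_spanningSets, compl_univ, measure_empty] at this
  obtain ⟨k, hk⟩ := (ENNReal.tendsto_nhds_zero.1 hcompl (ε / 2) (ENNReal.half_pos hε.ne')).exists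
  have hinter := hνμ.tendsto_measure_zero (hs _ (measurableSet_spanningSets μ k)
    (measure_spanningSets_lt_top μ k))
  filter_upwards [ENNReal.tendsto_nhds_zero.1 hinter (ε / 2) (ENNReal.half_pos hε.ne')] with i hi
  calc ν (s i) ≤ ν (s i ∩ spanningSets μ k) + ν (s i \ spanningSets μ k) :=
        measure_le_inter_add_sdiff ν _ _
    _ ≤ ε / 2 + ε / 2 := add_le_add hi ((measure_mono (sdiff_subset_compl _ _)).trans hk)
    _ = ε := ENNReal.add_halves ε

end MeasureTheory.Measure.AbsolutelyContinuous

namespace TendstoLocInMeasure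

variable {μ : Measure α} {f : ℕ → Lp ℝ 1 μ} {g : α → ℝ}

theorem tendstoInMeasure {ν : Measure α} [IsFiniteMeasure ν] [SigmaFinite μ] (hνμ : ν ≪ μ)
    (hf : TendstoLocInMeasure μ f g) : TendstoInMeasure ν (fun n => ⇑(f n)) atTop g := by
  rw [tendstoInMeasure_iff_norm]
  intro ε hε
  refine hνμ.tendsto_measure_zero_of_forall_inter fun E hE hEfin => ?_
  refine tendsto_of_tendsto_of_tendsto_of_le_of_le tendsto_const_nhds
    (hf E hE hEfin (ε / 2) (half_pos hε)) (fun _ => zero_le) (fun n => measure_mono ?_)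
  rintro x ⟨hx, hxE⟩
  exact ⟨hxE, (half_lt_self hε).trans_le hx⟩

theorem exists_seq_tendsto_ae [SigmaFinite μ] (hf : TendstoLocInMeasure μ f g) :
    ∃ ψ : ℕ → ℕ, StrictMono ψ ∧ ∀ᵐ x ∂μ, Tendsto (fun k => f (ψ k) x) atTop (𝓝 (g x)) := by
  obtain ⟨ν, _, hμν, hνμ⟩ := exists_isFiniteMeasure_absolutelyContinuous μ
  obtain ⟨ψ, hψ, hae⟩ := (hf.tendstoInMeasure hνμ).exists_seq_tendsto_ae
  exact ⟨ψ, hψ, hμν.ae_le hae⟩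

end TendstoLocInMeasure

namespace MeasureTheory.L1

variable {E : Type*} [NormedAddCommGroup E] {μ : Measure α}

theorem norm_sub_eq_integral (u v : Lp E 1 μ) : ‖u - v‖ = ∫ x, ‖u x - v x‖ ∂μ := by
  rw [norm_eq_integral_norm]
  exact integral_congr_ae ((Lp.coeFn_sub u v).mono fun x hx => by simp only [hx, Pi.sub_apply])

theorem integrable_norm_sub (u v : Lp E 1 μ) : Integrable (fun x => ‖u x - v x‖) μ :=
  ((integrable_coeFn (u - v)).congr (Lp.coeFn_sub u v)).norm

theorem tendsto_norm_sub_sub_norm_sub {u : ℕ → Lp E 1 μ} {g : Lp E 1 μ}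
    (hu : ∀ᵐ x ∂μ, Tendsto (fun k => u k x) atTop (𝓝 (g x))) (h : Lp E 1 μ) :
    Tendsto (fun k => ‖u k - h‖ - ‖u k - g‖) atTop (𝓝 ‖g - h‖) := by
  simp_rw [norm_sub_eq_integral,
    ← MeasureTheory.integral_sub (integrable_norm_sub _ _) (integrable_norm_sub _ _)]
  refine tendsto_integral_of_dominated_convergence (fun x => ‖g x - h x‖)
    (fun k => ((integrable_norm_sub _ _).sub (integrable_norm_sub _ _)).aestronglyMeasurable)
    (integrable_norm_sub g h) (fun k => ae_of_all _ fun x => ?_) ?_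
  · simpa only [Real.norm_eq_abs, sub_sub_sub_cancel_left] using
      abs_norm_sub_norm_le (u k x - h x) (u k x - g x)
  · filter_upwards [hu] with x hx
    simpa using ((hx.sub_const (h x)).norm.sub (hx.sub_const (g x)).norm)

end MeasureTheory.L1

section ApproximateFixedPoints

variable {E : Type*} [NormedAddCommGroup E] [NormedSpace ℝ E] [CompleteSpace E] {K : Set E}
  {T : E → E}

theorem Convex.exists_lineMap_eq_of_lipschitzOnWith (hconv : Convex ℝ K) (hclosed : IsClosed K)
    (hT : MapsTo T K K) (hTlip : LipschitzOnWith 1 T K) {x₀ : E} (hx₀ : x₀ ∈ K) {r : ℝ}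
    (hr0 : 0 ≤ r) (hr1 : r < 1) : ∃ x ∈ K, AffineMap.lineMap x₀ (T x) r = x := by
  have : CompleteSpace K := hclosed.completeSpace_coe
  have : Nonempty K := ⟨⟨x₀, hx₀⟩⟩
  let S : K → K := fun y =>
    ⟨AffineMap.lineMap x₀ (T y) r, hconv.lineMap_mem hx₀ (hT y.2) ⟨hr0, hr1.le⟩⟩
  have hS : ContractingWith ⟨r, hr0⟩ S := by
    refine ⟨hr1, LipschitzWith.of_dist_le_mul fun y z => ?_⟩
    calc dist (S y) (S z) = r * dist (T y) (T z) := by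
          simp [S, Subtype.dist_eq, AffineMap.lineMap_apply_module, dist_smul₀, abs_of_nonneg hr0]
      _ ≤ r * dist y z := by
          gcongr
          simpa [Subtype.dist_eq] using hTlip.dist_le_mul y y.2 z z.2
  exact ⟨_, (ContractingWith.fixedPoint S hS).2, congrArg Subtype.val hS.fixedPoint_isFixedPt⟩

theorem exists_seq_tendsto_dist_self_zero (hne : K.Nonempty) (hbdd : Bornology.IsBounded K)
    (hconv : Convex ℝ K) (hclosed : IsClosed K) (hT : MapsTo T K K)
    (hTlip : LipschitzOnWith 1 T K) :
    ∃ x : ℕ → E, (∀ n, x n ∈ K) ∧ Tendsto (fun n => dist (T (x n)) (x n)) atTop (𝓝 0) := by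
  obtain ⟨x₀, hx₀⟩ := hne
  have hfix (n : ℕ) := hconv.exists_lineMap_eq_of_lipschitzOnWith hclosed hT hTlip hx₀
    (r := 1 - 1 / (n + 1))
    (sub_nonneg.2 (div_le_one_of_le₀ (by simp) (by positivity))) (sub_lt_self _ (by positivity))
  choose x hxK hx using hfix
  refine ⟨x, hxK, squeeze_zero (fun _ => dist_nonneg) (fun n => ?_)
    (by simpa only [zero_mul] using
      tendsto_one_div_add_atTop_nhds_zero_nat.mul_const (Metric.diam K))⟩
  calc dist (T (x n)) (x n) = 1 / (n + 1) * dist x₀ (T (x n)) := by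
        have h := dist_right_lineMap x₀ (T (x n)) (1 - 1 / (n + 1) : ℝ)
        rwa [hx n, sub_sub_cancel, Real.norm_of_nonneg (by positivity)] at h
    _ ≤ 1 / (n + 1) * Metric.diam K := by
        gcongr
        exact Metric.dist_le_diam_of_mem hbdd hx₀ (hT (hxK n))

end ApproximateFixedPoints

/-- fixed points under measure-compactness: every nonexpansive self-map of a
nonempty, bounded, closed, convex, measure-compact subset of `L¹(μ)` has a fixed point. -/
theorem fixedPoint_of_measureCompact
    (μ : Measure α) [SigmaFinite μ]
    (K : Set (Lp ℝ 1 μ)) (hne : K.Nonempty) (hbdd : Bornology.IsBounded K)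
    (hclosed : IsClosed K) (hconv : Convex ℝ K) (hmc : MeasCompact μ K)
    (T : Lp ℝ 1 μ → Lp ℝ 1 μ) (hTmaps : Set.MapsTo T K K)
    (hTnonexp : ∀ x ∈ K, ∀ y ∈ K, ‖T x - T y‖ ≤ ‖x - y‖) :
    ∃ x ∈ K, T x = x := by
  have hTlip : LipschitzOnWith 1 T K := LipschitzOnWith.of_dist_le_mul fun x hx y hy => by
    simpa [dist_eq_norm] using hTnonexp x hx y hy
  obtain ⟨x, hxK, hx⟩ := exists_seq_tendsto_dist_self_zero hne hbdd hconv hclosed hTmaps hTlip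
  obtain ⟨g, hgK, φ, hφ, hloc⟩ := hmc x hxK
  obtain ⟨ψ, hψ, hae⟩ := hloc.exists_seq_tendsto_ae
  set y := fun k => x (φ (ψ k))
  have hy : Tendsto (fun k => dist (T (y k)) (y k)) atTop (𝓝 0) :=
    hx.comp (hφ.comp hψ).tendsto_atTop
  have hle (k : ℕ) : ‖y k - T g‖ - ‖y k - g‖ ≤ dist (T (y k)) (y k) := by
    have := norm_sub_le_norm_sub_add_norm_sub (y k) (T (y k)) (T g)
    have := hTnonexp (y k) (hxK _) g hgK
    rw [dist_eq_norm']
    linarith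
  have hgTg : ‖g - T g‖ ≤ 0 :=
    le_of_tendsto_of_tendsto' (L1.tendsto_norm_sub_sub_norm_sub hae (T g)) hy hle
  exact ⟨g, hgK, (sub_eq_zero.1 (norm_le_zero_iff.1 hgTg)).symm⟩
end
end
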